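/- Let F = {a (constant), b (constant), f (arity 1), g (arity 1)} and let R be the rewrite system {f(g(a)) → a, f(f(x)) → b, g(x) → f(g(x))}. Then R is not terminating for the standard rewriting relation (e.g., there is an infinite →_R derivation from g(a)), yet every ground term of T(F) outermost terminates: there is no infinite sequence of outermost rewrite steps starting from any ground term. -/
import Mathlib


namespace TRS

inductive Term (F V : Type*) where
  | var : V → Term F V
  | app : F → List (Term F V) → Term F V

namespace Term

variable {F V : Type*}

mutual
  def subst (σ : V → Term F V) : Term F V → Term F V
    | .var x => σ x
    | .app f ts => .app f (substList σ ts)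

  def substList (σ : V → Term F V) : List (Term F V) → List (Term F V)
    | [] => []
    | t :: ts => subst σ t :: substList σ ts
end

mutual
  def vars : Term F V → Set V
    | .var x => {x}
    | .app _ ts => varsList ts

  def varsList : List (Term F V) → Set V
    | [] => ∅
    | t :: ts => vars t ∪ varsList ts
end

def IsGround (t : Term F V) : Prop := vars t = ∅

def top : Term F V → Option F
  | .var _ => none
  | .app f _ => some f

def subtermAt : List ℕ → Term F V → Option (Term F V)
  | [], t => some t
  | _ :: _, .var _ => none
  | i :: p, .app _ ts =>
    match ts[i]? with
    | none => none
    | some u => subtermAt p u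

def replaceAt : List ℕ → Term F V → Term F V → Option (Term F V)
  | [], _, u => some u
  | _ :: _, .var _, _ => none
  | i :: p, .app f ts, u =>
    match ts[i]? with
    | none => none
    | some ti =>
      match replaceAt p ti u with
      | none => none
      | some ti' => some (.app f (ts.set i ti'))

inductive WF (arity : F → ℕ) : Term F V → Prop
  | var (x : V) : WF arity (.var x)
  | app (f : F) (ts : List (Term F V)) :
      ts.length = arity f → (∀ t ∈ ts, WF arity t) → WF arity (.app f ts)

inductive Occurs (f : F) : Term F V → Prop
  | head (ts : List (Term F V)) : Occurs f (.app f ts)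
  | arg {g : F} {ts : List (Term F V)} {t : Term F V} :
      t ∈ ts → Occurs f t → Occurs f (.app g ts)

end Term

open Term

structure Rule (F V : Type*) where
  lhs : Term F V
  rhs : Term F V

variable {F V : Type*}

/-- The domain of a substitution. -/
def SDom (σ : V → Term F V) : Set V := {x | σ x ≠ Term.var x}

/-- The range (variables) of a substitution. -/
def SRan (σ : V → Term F V) : Set V := ⋃ x ∈ SDom σ, vars (σ x)

/-- A ground substitution maps every variable of its domain to a ground term. -/
def GroundSubst (σ : V → Term F V) : Prop := ∀ x ∈ SDom σ, IsGround (σ x)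

/-- `R` is a rewrite system: no left-hand side is a variable, and
`Var(rhs) ⊆ Var(lhs)` for every rule. -/
def IsRS (R : List (Rule F V)) : Prop :=
  ∀ ρ ∈ R, (∀ x : V, ρ.lhs ≠ Term.var x) ∧ vars ρ.rhs ⊆ vars ρ.lhs

/-- Rewriting at position `p` with the rule `l → r`. -/
def RewriteAtWith (l r : Term F V) (p : List ℕ) (s t : Term F V) : Prop :=
  ∃ τ : V → Term F V, subtermAt p s = some (subst τ l) ∧ replaceAt p s (subst τ r) = some t

/-- Rewriting at position `p` with some rule of `R`. -/
def RewriteAt (R : List (Rule F V)) (p : List ℕ) (s t : Term F V) : Prop :=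
  ∃ ρ ∈ R, RewriteAtWith ρ.lhs ρ.rhs p s t

/-- The rewriting relation induced by `R`. -/
def Rewrite (R : List (Rule F V)) (s t : Term F V) : Prop :=
  ∃ p, RewriteAt R p s t

def ReducibleAt (R : List (Rule F V)) (s : Term F V) (p : List ℕ) : Prop :=
  ∃ t, RewriteAt R p s t

def Reducible (R : List (Rule F V)) (s : Term F V) : Prop :=
  ∃ t, Rewrite R s t

def NormalForm (R : List (Rule F V)) (s : Term F V) : Prop := ¬ Reducible R s

/-- `n` is a normal form of `s`. -/
def IsNormalFormOf (R : List (Rule F V)) (s n : Term F V) : Prop :=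
  Relation.ReflTransGen (Rewrite R) s n ∧ NormalForm R n

/-- `q` is strictly below `p` (`p` is a strict prefix of `q`). -/
def StrictBelow (p q : List ℕ) : Prop := p <+: q ∧ p ≠ q

/-- Innermost rewrite step at position `p`. -/
def InnAt (R : List (Rule F V)) (p : List ℕ) (s t : Term F V) : Prop :=
  RewriteAt R p s t ∧ ∀ q, StrictBelow p q → ¬ ReducibleAt R s q

def InnStep (R : List (Rule F V)) (s t : Term F V) : Prop := ∃ p, InnAt R p s t

/-- Outermost rewrite step at position `p`. -/
def OutAt (R : List (Rule F V)) (p : List ℕ) (s t : Term F V) : Prop :=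
  RewriteAt R p s t ∧ ∀ q, StrictBelow q p → ¬ ReducibleAt R s q

def OutStep (R : List (Rule F V)) (s t : Term F V) : Prop := ∃ p, OutAt R p s t

/-- Innermost rewrite step at position `p` with rule `l → r`. -/
def InnAtWith (R : List (Rule F V)) (l r : Term F V) (p : List ℕ) (s t : Term F V) : Prop :=
  RewriteAtWith l r p s t ∧ ∀ q, StrictBelow p q → ¬ ReducibleAt R s q

/-- Outermost rewrite step at position `p` with rule `l → r`. -/
def OutAtWith (R : List (Rule F V)) (l r : Term F V) (p : List ℕ) (s t : Term F V) : Prop :=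
  RewriteAtWith l r p s t ∧ ∀ q, StrictBelow q p → ¬ ReducibleAt R s q

/-- No infinite innermost derivation starts from `t`. -/
def InnTerminates (R : List (Rule F V)) (t : Term F V) : Prop :=
  ¬ ∃ f : ℕ → Term F V, f 0 = t ∧ ∀ n, InnStep R (f n) (f (n + 1))

/-- No infinite outermost derivation starts from `t`. -/
def OutTerminates (R : List (Rule F V)) (t : Term F V) : Prop :=
  ¬ ∃ f : ℕ → Term F V, f 0 = t ∧ ∀ n, OutStep R (f n) (f (n + 1))

def Unifies (σ : V → Term F V) (u v : Term F V) : Prop := subst σ u = subst σ v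

/-- `σ` is a most general unifier of `u` and `v`. -/
def IsMGU (u v : Term F V) (σ : V → Term F V) : Prop :=
  Unifies σ u v ∧
    ∀ τ : V → Term F V, Unifies τ u v → ∃ ρ : V → Term F V, ∀ x, subst ρ (σ x) = τ x

/-- The usable rules of a term (least set closed under the defining equations). -/
inductive Usable (R : List (Rule F V)) (XA : Set V) : Term F V → Rule F V → Prop
  | var {x : V} {ρ : Rule F V} : x ∉ XA → ρ ∈ R → Usable R XA (Term.var x) ρ
  | rls {f : F} {ts : List (Term F V)} {ρ : Rule F V} :
      ρ ∈ R → Term.top ρ.lhs = some f → Usable R XA (Term.app f ts) ρ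
  | arg {f : F} {ts : List (Term F V)} {t : Term F V} {ρ : Rule F V} :
      t ∈ ts → Usable R XA t ρ → Usable R XA (Term.app f ts) ρ
  | rhs {f : F} {ts : List (Term F V)} {ρ' ρ : Rule F V} :
      ρ' ∈ R → Term.top ρ'.lhs = some f → Usable R XA ρ'.rhs ρ → Usable R XA (Term.app f ts) ρ

/-- The signature F = {a, b, f:1, g:1}. -/
inductive F18 : Type
  | a | b | f | g

def arity18 : F18 → ℕ
  | .a => 0
  | .b => 0
  | .f => 1
  | .g => 1

/-- The system {f(g(a)) → a, f(f(x)) → b, g(x) → f(g(x))}. -/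
def R18 : List (Rule F18 ℕ) :=
  [ ⟨.app .f [.app .g [.app .a []]], .app .a []⟩,
    ⟨.app .f [.app .f [.var 0]], .app .b []⟩,
    ⟨.app .g [.var 0], .app .f [.app .g [.var 0]]⟩ ]

/-- The infinite chain g(a), f(g(a)), f(f(g(a))), ... -/
def chain18 : ℕ → Term F18 ℕ
  | 0 => .app .g [.app .a []]
  | n+1 => .app .f [chain18 n]

open Term in
lemma chain18_step (n : ℕ) :
    subtermAt (List.replicate n 0) (chain18 n) = some (.app .g [.app .a []]) ∧
    replaceAt (List.replicate n 0) (chain18 n) (.app .f [.app .g [.app .a []]])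
      = some (chain18 (n+1)) := by
  induction n with
  | zero => simp [chain18, subtermAt, replaceAt]
  | succ n ih =>
    simp [chain18, List.replicate_succ, subtermAt, replaceAt, ih.1, ih.2]

open Term in
lemma rewrite_chain18 (n : ℕ) : Rewrite R18 (chain18 n) (chain18 (n+1)) :=
  ⟨List.replicate n 0,
   ⟨.app .g [.var 0], .app .f [.app .g [.var 0]]⟩, by simp [R18],
   fun _ => .app .a [],
   by simpa [subst, substList] using (chain18_step n).1,
   by simpa [subst, substList] using (chain18_step n).2⟩

/-- Measure decreasing along outermost steps. -/
def mu18 : Term F18 ℕ → ℕ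
  | .app .g _ => 3
  | .app .f (.app .g _ :: _) => 2
  | .app .f (.app .f _ :: _) => 1
  | _ => 0

open Term in
example (u : Term F18 ℕ) (ts l : List (Term F18 ℕ)) (x : ℕ) :
    mu18 (.app .g ts) = 3 ∧ mu18 (.app .f (.app .g ts :: l)) = 2 ∧
    mu18 (.app .f (.app .f ts :: l)) = 1 ∧ mu18 (.var x) = 0 ∧
    mu18 (.app .a ts) = 0 ∧ mu18 (.app .b ts) = 0 ∧
    mu18 (.app .f [.var x]) = 0 ∧ mu18 (.app .f (.app .a ts :: l)) = 0 ∧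
    mu18 (.app .f []) = 0 := by
  refine ⟨rfl, rfl, rfl, rfl, rfl, rfl, rfl, rfl, rfl⟩
open Term

lemma red_g18 (u : Term F18 ℕ) : ReducibleAt R18 (.app .g [u]) [] :=
  ⟨.app .f [.app .g [u]],
   ⟨.app .g [.var 0], .app .f [.app .g [.var 0]]⟩, by simp [R18],
   fun _ => u, by simp [subtermAt, subst, substList], by simp [replaceAt, subst, substList]⟩

lemma red_ff18 (v : Term F18 ℕ) : ReducibleAt R18 (.app .f [.app .f [v]]) [] :=
  ⟨.app .b [],
   ⟨.app .f [.app .f [.var 0]], .app .b []⟩, by simp [R18],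
   fun _ => v, by simp [subtermAt, subst, substList], by simp [replaceAt, subst, substList]⟩

lemma red_fg18 (v : Term F18 ℕ) : ReducibleAt R18 (.app .f [.app .g [v]]) [0] :=
  ⟨.app .f [.app .f [.app .g [v]]],
   ⟨.app .g [.var 0], .app .f [.app .g [.var 0]]⟩, by simp [R18],
   fun _ => v, by simp [subtermAt, subst, substList], by simp [replaceAt, subst, substList]⟩

lemma no_rw_var18 (x : ℕ) (p : List ℕ) (t : Term F18 ℕ) : ¬ RewriteAt R18 p (.var x) t := by
  rintro ⟨ρ, hρ, τ, hsub, hrep⟩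
  cases p with
  | nil =>
    simp only [R18, List.mem_cons, List.not_mem_nil, or_false] at hρ
    rcases hρ with h | h | h <;> subst h <;>
      simp [subtermAt, subst, substList] at hsub
  | cons i p => simp [subtermAt] at hsub

lemma no_rw_nil18 (f0 : F18) (p : List ℕ) (t : Term F18 ℕ) :
    ¬ RewriteAt R18 p (.app f0 []) t := by
  rintro ⟨ρ, hρ, τ, hsub, hrep⟩
  cases p with
  | nil =>
    simp only [R18, List.mem_cons, List.not_mem_nil, or_false] at hρ
    rcases hρ with h | h | h <;> subst h <;>
      simp [subtermAt, subst, substList] at hsub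
  | cons i p => simp [subtermAt] at hsub
lemma out_dec18 {s t : Term F18 ℕ} (hwf : WF arity18 s) (h : OutStep R18 s t) :
    WF arity18 t ∧ mu18 t < mu18 s := by
  obtain ⟨p, hrw, hout⟩ := h
  cases hwf with
  | var x => exact absurd hrw (no_rw_var18 x p t)
  | app f0 ts hlen hall =>
    cases f0 with
    | a =>
      obtain rfl : ts = [] := List.length_eq_zero_iff.mp hlen
      exact absurd hrw (no_rw_nil18 _ p t)
    | b =>
      obtain rfl : ts = [] := List.length_eq_zero_iff.mp hlen
      exact absurd hrw (no_rw_nil18 _ p t)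
    | g =>
      obtain ⟨u, rfl⟩ := List.length_eq_one_iff.mp hlen
      cases p with
      | cons i p' => exact absurd (red_g18 u) (hout [] ⟨List.nil_prefix, by simp⟩)
      | nil =>
        obtain ⟨ρ, hρ, τ, hsub, hrep⟩ := hrw
        simp only [R18, List.mem_cons, List.not_mem_nil, or_false] at hρ
        rcases hρ with rfl | rfl | rfl
        · simp [subtermAt, subst, substList] at hsub
        · simp [subtermAt, subst, substList] at hsub
        · simp only [subtermAt, subst, substList, Option.some.injEq, Term.app.injEq,
            List.cons.injEq, and_true, true_and] at hsub
          obtain rfl : u = τ 0 := hsub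
          simp only [replaceAt, subst, substList, Option.some.injEq] at hrep
          subst hrep
          refine ⟨?_, by show (2:ℕ) < 3; decide⟩
          · exact WF.app _ _ rfl (by
              rintro x hx
              simp at hx
              subst hx
              exact WF.app _ _ rfl (by
                rintro y hy; simp at hy; subst hy
                exact hall _ (by simp)))
    | f =>
      obtain ⟨u, rfl⟩ := List.length_eq_one_iff.mp hlen
      have hwfu : WF arity18 u := hall u (by simp)
      cases p with
      | nil =>
        obtain ⟨ρ, hρ, τ, hsub, hrep⟩ := hrw
        simp only [R18, List.mem_cons, List.not_mem_nil, or_false] at hρ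
        rcases hρ with rfl | rfl | rfl
        · simp only [subtermAt, subst, substList, Option.some.injEq, Term.app.injEq,
            List.cons.injEq, and_true, true_and] at hsub
          obtain rfl : u = .app .g [.app .a []] := hsub
          simp only [replaceAt, subst, substList, Option.some.injEq] at hrep
          subst hrep
          exact ⟨WF.app _ _ rfl (by simp), by show (0:ℕ) < 2; decide⟩
        · simp only [subtermAt, subst, substList, Option.some.injEq, Term.app.injEq,
            List.cons.injEq, and_true, true_and] at hsub
          obtain rfl : u = .app .f [τ 0] := hsub
          simp only [replaceAt, subst, substList, Option.some.injEq] at hrep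
          subst hrep
          exact ⟨WF.app _ _ rfl (by simp), by show (0:ℕ) < 1; decide⟩
        · simp [subtermAt, subst, substList] at hsub
      | cons i p' =>
        obtain ⟨ρ, hρ, τ, hsub, hrep⟩ := hrw
        cases i with
        | succ j => simp [subtermAt] at hsub
        | zero =>
          simp only [subtermAt, List.getElem?_cons_zero] at hsub
          rcases hrepl : replaceAt p' u (subst τ ρ.rhs) with _ | u'
          · simp [replaceAt, hrepl] at hrep
          simp only [replaceAt, hrepl, List.getElem?_cons_zero, Option.some.injEq,
            List.set_cons_zero] at hrep
          subst hrep
          have hrw' : RewriteAt R18 p' u u' := ⟨ρ, hρ, τ, hsub, hrepl⟩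
          cases hwfu with
          | var x => exact absurd hrw' (no_rw_var18 x p' u')
          | app f1 ts1 hlen1 hall1 =>
            cases f1 with
            | a =>
              obtain rfl : ts1 = [] := List.length_eq_zero_iff.mp hlen1
              exact absurd hrw' (no_rw_nil18 _ p' u')
            | b =>
              obtain rfl : ts1 = [] := List.length_eq_zero_iff.mp hlen1
              exact absurd hrw' (no_rw_nil18 _ p' u')
            | f =>
              obtain ⟨v, rfl⟩ := List.length_eq_one_iff.mp hlen1
              exact absurd (red_ff18 v) (hout [] ⟨List.nil_prefix, by simp⟩)
            | g =>
              obtain ⟨v, rfl⟩ := List.length_eq_one_iff.mp hlen1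
              cases p' with
              | cons j p'' =>
                exact absurd (red_fg18 v) (hout [0] ⟨⟨j :: p'', rfl⟩, by simp⟩)
              | nil =>
                obtain ⟨ρ', hρ', τ', hsub', hrepl'⟩ := hrw'
                simp only [R18, List.mem_cons, List.not_mem_nil, or_false] at hρ'
                rcases hρ' with rfl | rfl | rfl
                · simp [subtermAt, subst, substList] at hsub'
                · simp [subtermAt, subst, substList] at hsub'
                · simp only [subtermAt, subst, substList, Option.some.injEq, Term.app.injEq,
                    List.cons.injEq, and_true, true_and] at hsub'
                  obtain rfl : v = τ' 0 := hsub'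
                  simp only [replaceAt, subst, substList, Option.some.injEq] at hrepl'
                  subst hrepl'
                  refine ⟨WF.app _ _ rfl ?_, by show (1:ℕ) < 2; decide⟩
                  rintro x hx
                  simp at hx
                  subst hx
                  refine WF.app _ _ rfl ?_
                  rintro y hy
                  simp at hy
                  subst hy
                  exact hall _ (by simp)

/-- R18 is not terminating for standard rewriting (there is an infinite
derivation from g(a)), yet every ground term of T(F) outermost terminates. -/
theorem R18_nonterminating_but_outermost_terminating :
    (∃ seq : ℕ → Term F18 ℕ, seq 0 = .app .g [.app .a []] ∧
        ∀ n, Rewrite R18 (seq n) (seq (n + 1))) ∧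
    (∀ t : Term F18 ℕ, IsGround t → Term.WF arity18 t → OutTerminates R18 t) := by
  constructor
  · exact ⟨chain18, rfl, rewrite_chain18⟩
  · rintro t - hwf ⟨f, hf0, hstep⟩
    have key : ∀ n, WF arity18 (f n) ∧ mu18 (f n) + n ≤ mu18 (f 0) := by
      intro n
      induction n with
      | zero => exact ⟨hf0 ▸ hwf, le_rfl⟩
      | succ n ih =>
        obtain ⟨h1, h2⟩ := out_dec18 ih.1 (hstep n)
        have := ih.2
        exact ⟨h1, by omega⟩
    have := (key (mu18 (f 0) + 1)).2
    omega

end TRS
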